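/- Let p ≥ 1 be odd and K̂ the unit reference triangle. Then ∫_{K̂} P_{p-1}^{(0,2)}(1 − 2λ̂_1(x)) · (d/ds P_p^{(0,0)})(1 − 2λ̂_2(x)) dx = (−1)^{p-1}·|K̂| = 1/2, where λ̂_1, λ̂_2 are the barycentric coordinates for the first two vertices. -/

import Mathlib

/-!
Integrating first in `y`, the inner integral of `P_{p-1}^{(0,2)}(1 - 2λ̂₁)` over `0 ≤ y ≤ 1 - x` is
`G(1 - x)`, where `G` is the primitive of `P_{p-1}^{(0,2)}(1 - 2·)` vanishing at `0`. Integrating by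
parts in `x` against `P_p'(1 - 2x) = (-½ P_p(1 - 2x))'` leaves the boundary term
`½ P_p(1) G(1) = ¼ ∫_{-1}^{1} P_{p-1}^{(0,2)}` and a multiple of
`∫_{-1}^{1} P_p(t) P_{p-1}^{(0,2)}(-t) dt`. The latter vanishes: by Rodrigues' formula `P_p` is a
multiple of `D^p (t² - 1)^p`, and `p` integrations by parts move all derivatives onto a polynomial
of degree `p - 1`. Finally `∫_{-1}^{1} P_n^{(0,2)} = 2 (-1)^n`: Beta integrals reduce it term by
term to the alternating sum `∑_{s ≤ n} (-1)^s C(n+2, s) = (-1)^n (n + 1)`.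
-/

open MeasureTheory Finset

/-- The Jacobi polynomial `P_n^{(a,b)}` with nonnegative integer parameters,
given by the standard finite-sum formula, normalized by
`P_n^{(a,b)}(1) = (a+1)_n / n!`. -/
noncomputable def jacobiP (a b n : ℕ) (x : ℝ) : ℝ :=
  ∑ s ∈ Finset.range (n + 1),
    (Nat.choose (n + a) (n - s) : ℝ) * (Nat.choose (n + b) s : ℝ) *
      ((x - 1) / 2) ^ s * ((x + 1) / 2) ^ (n - s)

/-- The closed unit reference triangle in `ℝ × ℝ` with vertices
`(0,0)`, `(1,0)`, `(0,1)`. -/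
def refTriangle : Set (ℝ × ℝ) :=
  {x : ℝ × ℝ | 0 ≤ x.1 ∧ 0 ≤ x.2 ∧ x.1 + x.2 ≤ 1}

open Polynomial

namespace Polynomial

theorem X_sq_sub_one_pow {R : Type*} [CommRing R] (n : ℕ) :
    (X ^ 2 - 1 : R[X]) ^ n = (X - C 1) ^ n * (X - C (-1)) ^ n := by
  rw [← mul_pow]
  congr 1
  simp only [map_neg, map_one]
  ring

theorem integral_eval_derivative_mul (f g : ℝ[X]) (a b : ℝ) :
    ∫ x in a..b, (derivative f).eval x * g.eval x =
      f.eval b * g.eval b - f.eval a * g.eval a -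
        ∫ x in a..b, f.eval x * (derivative g).eval x := by
  have := intervalIntegral.integral_mul_deriv_eq_deriv_mul (a := a) (b := b)
    (fun x _ => f.hasDerivAt x) (fun x _ => g.hasDerivAt x)
    (f.derivative.continuous.intervalIntegrable _ _)
    (g.derivative.continuous.intervalIntegrable _ _)
  linarith

theorem integral_eval_iterate_derivative_mul_eq_zero {u : ℝ[X]} {a b : ℝ} {n : ℕ}
    (ha : (X - C a) ^ n ∣ u) (hb : (X - C b) ^ n ∣ u) {q : ℝ[X]} (hq : derivative^[n] q = 0) :
    ∫ x in a..b, (derivative^[n] u).eval x * q.eval x = 0 := by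
  induction n generalizing q with
  | zero => simp [show q = 0 from hq]
  | succ n ih =>
    have hroot : ∀ c, (X - C c) ^ (n + 1) ∣ u → (derivative^[n] u).eval c = 0 := fun c hc => by
      have := pow_sub_dvd_iterate_derivative_of_pow_dvd n hc
      rwa [Nat.add_sub_cancel_left, pow_one, dvd_iff_isRoot] at this
    rw [Function.iterate_succ_apply', integral_eval_derivative_mul, hroot a ha, hroot b hb,
      ih (dvd_trans (pow_dvd_pow _ n.le_succ) ha) (dvd_trans (pow_dvd_pow _ n.le_succ) hb)
        (by rwa [← Function.iterate_succ_apply])]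
    simp

end Polynomial

noncomputable def jacobiPoly (a b n : ℕ) : ℝ[X] :=
  ∑ s ∈ range (n + 1), C ((n + a).choose (n - s) * (n + b).choose s : ℝ) *
    (C 2⁻¹ * (X - 1)) ^ s * (C 2⁻¹ * (X + 1)) ^ (n - s)

theorem eval_jacobiPoly (a b n : ℕ) (x : ℝ) : (jacobiPoly a b n).eval x = jacobiP a b n x := by
  simp [jacobiPoly, jacobiP, eval_finsetSum, div_eq_inv_mul]

theorem natDegree_jacobiPoly_le (a b n : ℕ) : (jacobiPoly a b n).natDegree ≤ n := by
  refine natDegree_sum_le_of_forall_le _ _ fun s hs => ?_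
  have hs : s ≤ n := Nat.lt_succ_iff.mp (mem_range.mp hs)
  refine natDegree_mul_le_of_le (natDegree_mul_le_of_le (natDegree_C _).le
    (natDegree_pow_le_of_le (m := 1) s ?_)) (natDegree_pow_le_of_le (m := 1) (n - s) ?_) |>.trans
    (by omega)
  · compute_degree!
  · compute_degree!

theorem jacobiP_one (a b n : ℕ) : jacobiP a b n 1 = (n + a).choose n := by
  rw [jacobiP, sum_eq_single_of_mem 0 (by simp) fun s _ hs => by simp [hs]]
  norm_num

theorem contDiff_jacobiP (a b n : ℕ) {k : WithTop ℕ∞} : ContDiff ℝ k (jacobiP a b n) := by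
  unfold jacobiP
  fun_prop

theorem hasDerivAt_neg_half_mul_jacobiP_one_sub_two_mul (a b n : ℕ) (x : ℝ) :
    HasDerivAt (fun x => -2⁻¹ * jacobiP a b n (1 - 2 * x))
      (deriv (jacobiP a b n) (1 - 2 * x)) x := by
  have hlin : HasDerivAt (fun x : ℝ => 1 - 2 * x) (-2) x := by
    simpa using ((hasDerivAt_id x).const_mul 2).const_sub 1
  exact ((((contDiff_jacobiP a b n (k := 1)).differentiable one_ne_zero _).hasDerivAt.comp x
    hlin).const_mul (-2⁻¹)).congr_deriv (by ring)

theorem two_pow_mul_factorial_mul_jacobiP_zero_zero (n : ℕ) (x : ℝ) :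
    (2 ^ n * n.factorial : ℝ) * jacobiP 0 0 n x =
      (derivative^[n] ((X ^ 2 - 1) ^ n : ℝ[X])).eval x := by
  rw [X_sq_sub_one_pow, iterate_derivative_mul, eval_finsetSum, jacobiP, mul_sum]
  refine sum_congr rfl fun k hk => ?_
  have hk : k ≤ n := Nat.lt_succ_iff.mp (mem_range.mp hk)
  have hcoeff : (n.choose k * n.descFactorial (n - k) * n.descFactorial k : ℝ) =
      n.factorial * (n.choose (n - k) * n.choose k) := by
    norm_cast
    rw [Nat.descFactorial_eq_factorial_mul_choose, Nat.descFactorial_eq_factorial_mul_choose,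
      ← Nat.choose_mul_factorial_mul_factorial hk, Nat.choose_symm hk]
    ring
  have hpow : (2 : ℝ) ^ n = 2 ^ k * 2 ^ (n - k) := by rw [← pow_add, Nat.add_sub_cancel' hk]
  simp only [iterate_derivative_X_sub_pow, Nat.sub_sub_self hk, eval_natCast, eval_mul, eval_pow,
    eval_sub, eval_X, eval_C, nsmul_eq_mul, Nat.add_zero]
  rw [hpow, div_pow, div_pow]
  field_simp
  rw [sub_neg_eq_add]
  linear_combination (-(x - 1) ^ k * (x + 1) ^ (n - k)) * hcoeff

theorem integral_jacobiP_zero_zero_mul_eq_zero {n : ℕ} {q : ℝ[X]} (hq : q.natDegree < n) :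
    ∫ t in (-1)..1, jacobiP 0 0 n t * q.eval t = 0 := by
  have horth := integral_eval_iterate_derivative_mul_eq_zero (a := -1) (b := 1)
    (X_sq_sub_one_pow (R := ℝ) n ▸ dvd_mul_left _ _)
    (X_sq_sub_one_pow (R := ℝ) n ▸ dvd_mul_right _ _)
    (iterate_derivative_eq_zero hq)
  have hL : ∀ t, jacobiP 0 0 n t =
      (2 ^ n * n.factorial : ℝ)⁻¹ * (derivative^[n] ((X ^ 2 - 1) ^ n : ℝ[X])).eval t := fun t => by
    rw [← two_pow_mul_factorial_mul_jacobiP_zero_zero, inv_mul_cancel_left₀ (by positivity)]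
  simp_rw [hL, mul_assoc, intervalIntegral.integral_const_mul, horth, mul_zero]

theorem integral_jacobiP_zero_zero_mul_jacobiP_neg_eq_zero {a b m n : ℕ} (h : m < n) :
    ∫ t in (-1)..1, jacobiP 0 0 n t * jacobiP a b m (-t) = 0 := by
  have hdeg : ((jacobiPoly a b m).comp (-X)).natDegree < n :=
    natDegree_comp_le.trans_lt (by simpa using (natDegree_jacobiPoly_le a b m).trans_lt h)
  simpa [eval_comp, eval_jacobiPoly] using integral_jacobiP_zero_zero_mul_eq_zero hdeg

theorem integral_pow_mul_one_sub_pow (a b : ℕ) :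
    ∫ x in (0 : ℝ)..1, x ^ a * (1 - x) ^ b = a.factorial * b.factorial / (a + b + 1).factorial := by
  induction b generalizing a with
  | zero =>
    simp only [pow_zero, mul_one, integral_pow, Nat.factorial_zero, Nat.add_zero,
      Nat.factorial_succ]
    push_cast
    field_simp
    simp
  | succ b ih =>
    have hsplit : ∀ x : ℝ, x ^ a * (1 - x) ^ (b + 1) =
        x ^ a * (1 - x) ^ b - x ^ (a + 1) * (1 - x) ^ b := fun x => by ring
    simp_rw [hsplit]
    rw [intervalIntegral.integral_sub (Continuous.intervalIntegrable (by fun_prop) _ _)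
      (Continuous.intervalIntegrable (by fun_prop) _ _), ih, ih,
      show a + 1 + b + 1 = a + (b + 1) + 1 by ring, Nat.factorial_succ (a + (b + 1)),
      show a + (b + 1) = a + b + 1 by ring, Nat.factorial_succ a, Nat.factorial_succ b]
    push_cast
    field_simp
    ring

theorem integral_comp_one_sub_two_mul (h : ℝ → ℝ) :
    ∫ x in (0 : ℝ)..1, h (1 - 2 * x) = 2⁻¹ * ∫ t in (-1)..1, h t := by
  rw [intervalIntegral.integral_comp_sub_mul h two_ne_zero, smul_eq_mul]
  norm_num

theorem integral_sub_one_div_two_pow_mul_add_one_div_two_pow (s m : ℕ) :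
    ∫ t in (-1 : ℝ)..1, ((t - 1) / 2) ^ s * ((t + 1) / 2) ^ m =
      2 * ((-1) ^ s * (s.factorial * m.factorial / (s + m + 1).factorial)) := by
  have hsub := integral_comp_one_sub_two_mul fun t => ((t - 1) / 2) ^ s * ((t + 1) / 2) ^ m
  have hpt : ∀ x : ℝ, ((1 - 2 * x - 1) / 2) ^ s * ((1 - 2 * x + 1) / 2) ^ m =
      (-1) ^ s * (x ^ s * (1 - x) ^ m) := fun x => by ring
  simp only [hpt, intervalIntegral.integral_const_mul, integral_pow_mul_one_sub_pow] at hsub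
  linarith

theorem integral_jacobiP_zero_two (n : ℕ) : ∫ t in (-1)..1, jacobiP 0 2 n t = 2 * (-1) ^ n := by
  have hterm : ∀ s ∈ range (n + 1),
      ∫ t in (-1 : ℝ)..1, ((n + 0).choose (n - s) * (n + 2).choose s : ℝ) *
        ((t - 1) / 2) ^ s * ((t + 1) / 2) ^ (n - s) =
        2 / (n + 1) * ((-1) ^ s * (n + 2).choose s) := by
    intro s hs
    have hs : s ≤ n := Nat.lt_succ_iff.mp (mem_range.mp hs)
    have hfact : (n.choose s * s.factorial * (n - s).factorial : ℝ) = n.factorial := by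
      exact_mod_cast Nat.choose_mul_factorial_mul_factorial hs
    have hchoose : (n.choose s : ℝ) ≠ 0 := by exact_mod_cast (Nat.choose_pos hs).ne'
    simp only [mul_assoc, intervalIntegral.integral_const_mul]
    rw [integral_sub_one_div_two_pow_mul_add_one_div_two_pow, Nat.add_sub_cancel' hs,
      Nat.add_zero, Nat.choose_symm hs, Nat.factorial_succ]
    push_cast
    rw [← hfact]
    field_simp
  have halt : ∑ s ∈ range (n + 1), ((-1) ^ s * (n + 2).choose s : ℝ) = (-1) ^ n * (n + 1) := by
    have := Int.alternating_sum_range_choose_eq_choose (n := n + 1) (m := n)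
    rw [Nat.choose_succ_self_right] at this
    exact_mod_cast this
  unfold jacobiP
  rw [intervalIntegral.integral_finsetSum fun _ _ =>
    Continuous.intervalIntegrable (by fun_prop) _ _, sum_congr rfl hterm, ← mul_sum, halt]
  field_simp

theorem isCompact_refTriangle : IsCompact refTriangle := by
  have hclosed : IsClosed refTriangle :=
    (isClosed_le continuous_const continuous_fst).inter
      ((isClosed_le continuous_const continuous_snd).inter
        (isClosed_le (continuous_fst.add continuous_snd) continuous_const))
  refine (isCompact_Icc (a := ((0 : ℝ), (0 : ℝ))) (b := (1, 1))).of_isClosed_subset hclosed ?_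
  rintro z ⟨h1, h2, h3⟩
  exact ⟨⟨h1, h2⟩, by linarith, by linarith⟩

theorem setIntegral_refTriangle {F : ℝ × ℝ → ℝ} (hF : IntegrableOn F refTriangle) :
    ∫ z in refTriangle, F z = ∫ x in (0 : ℝ)..1, ∫ y in (0 : ℝ)..(1 - x), F (x, y) := by
  have hT : MeasurableSet refTriangle := isCompact_refTriangle.isClosed.measurableSet
  have hslice : ∀ x y, refTriangle.indicator F (x, y) =
      (Set.Icc 0 1).indicator (fun x => (Set.Icc 0 (1 - x)).indicator (fun y => F (x, y)) y) x := by
    intro x y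
    simp only [Set.indicator_apply, refTriangle, Set.mem_ofPred_eq, Set.mem_Icc]
    split_ifs <;> grind
  have hsection : ∀ x, ∫ y, (Set.Icc 0 1).indicator
      (fun x => (Set.Icc 0 (1 - x)).indicator (fun y => F (x, y)) y) x =
      (Set.Icc 0 1).indicator (fun x => ∫ y in (0 : ℝ)..(1 - x), F (x, y)) x := by
    intro x
    by_cases hx : x ∈ Set.Icc (0 : ℝ) 1
    · simp only [Set.indicator_of_mem hx]
      rw [integral_indicator measurableSet_Icc, integral_Icc_eq_integral_Ioc,
        ← intervalIntegral.integral_of_le (by linarith [hx.2])]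
    · simp [Set.indicator_of_notMem hx]
  have hint : Integrable (refTriangle.indicator F) (volume.prod volume) := by
    rw [← Measure.volume_eq_prod]
    exact hF.integrable_indicator hT
  rw [← integral_indicator hT, Measure.volume_eq_prod, integral_prod _ hint]
  simp_rw [hslice, hsection]
  rw [integral_indicator measurableSet_Icc, integral_Icc_eq_integral_Ioc,
    ← intervalIntegral.integral_of_le zero_le_one]

theorem setIntegral_refTriangle_mul_deriv {f g g' : ℝ → ℝ} (hf : Continuous f)
    (hg : ∀ x, HasDerivAt g (g' x) x) (hg' : Continuous g') :
    ∫ z in refTriangle, f (1 - z.1 - z.2) * g' z.1 =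
      (∫ x in (0 : ℝ)..1, g x * f (1 - x)) - g 0 * ∫ x in (0 : ℝ)..1, f x := by
  set F : ℝ → ℝ := fun u => ∫ t in (0 : ℝ)..u, f t
  have hinner : ∀ x, ∫ y in (0 : ℝ)..(1 - x), f (1 - x - y) * g' x = F (1 - x) * g' x := by
    intro x
    rw [intervalIntegral.integral_mul_const, intervalIntegral.integral_comp_sub_left]
    simp [F]
  have hF : ∀ x, HasDerivAt (fun x => F (1 - x)) (-f (1 - x)) x := fun x => by
    simpa [F, Function.comp_def] using (hf.integral_hasStrictDerivAt 0 (1 - x)).hasDerivAt.comp x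
      ((hasDerivAt_id x).const_sub 1)
  have hparts := intervalIntegral.integral_mul_deriv_eq_deriv_mul (a := 0) (b := 1)
    (fun x _ => hF x) (fun x _ => hg x) (Continuous.intervalIntegrable (by fun_prop) _ _)
    (hg'.intervalIntegrable _ _)
  rw [setIntegral_refTriangle ((by fun_prop : Continuous fun z : ℝ × ℝ =>
    f (1 - z.1 - z.2) * g' z.1).continuousOn.integrableOn_compact isCompact_refTriangle)]
  simp_rw [hinner, hparts]
  simp [F, intervalIntegral.integral_neg, mul_comm]
  ring

theorem integral_jacobi_mul_deriv_legendre_refTriangle (p : ℕ) (hp : 1 ≤ p)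
    (hodd : Odd p) :
    (∫ x in refTriangle,
        jacobiP 0 2 (p - 1) (1 - 2 * (1 - x.1 - x.2)) *
          deriv (fun s => jacobiP 0 0 p s) (1 - 2 * x.1))
      = (-1 : ℝ) ^ (p - 1) * (1 / 2) ∧
    ((-1 : ℝ) ^ (p - 1) * (1 / 2 : ℝ) = 1 / 2) := by
  have hsign : (-1 : ℝ) ^ (p - 1) = 1 := (Nat.Odd.sub_odd hodd odd_one).neg_one_pow
  refine ⟨?_, by rw [hsign, one_mul]⟩
  have horth : ∫ x in (0 : ℝ)..1,
      -2⁻¹ * jacobiP 0 0 p (1 - 2 * x) * jacobiP 0 2 (p - 1) (1 - 2 * (1 - x)) = 0 := by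
    calc _ = ∫ x in (0 : ℝ)..1,
          -2⁻¹ * (jacobiP 0 0 p (1 - 2 * x) * jacobiP 0 2 (p - 1) (-(1 - 2 * x))) := by
          ring_nf
      _ = 0 := by
          rw [integral_comp_one_sub_two_mul fun t =>
              -2⁻¹ * (jacobiP 0 0 p t * jacobiP 0 2 (p - 1) (-t)),
            intervalIntegral.integral_const_mul,
            integral_jacobiP_zero_zero_mul_jacobiP_neg_eq_zero (by omega), mul_zero, mul_zero]
  have hJ : ∫ x in (0 : ℝ)..1, jacobiP 0 2 (p - 1) (1 - 2 * x) = (-1) ^ (p - 1) := by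
    rw [integral_comp_one_sub_two_mul (jacobiP 0 2 (p - 1)), integral_jacobiP_zero_two]
    ring
  rw [setIntegral_refTriangle_mul_deriv (f := fun s => jacobiP 0 2 (p - 1) (1 - 2 * s))
    ((contDiff_jacobiP (k := 0) _ _ _).continuous.comp (by fun_prop))
    (hasDerivAt_neg_half_mul_jacobiP_one_sub_two_mul 0 0 p)
    (((contDiff_jacobiP (k := 1) _ _ _).continuous_deriv le_rfl).comp (by fun_prop)), horth, hJ]
  norm_num [jacobiP_one, mul_comm]
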